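/- If A is symmetric positive definite and x^{(k+1)} = G_ω x^{(k)} + c_ω is the SOR iteration with fixed ω ∈ (0,2), then the sequence f(x^{(k)}) with f(x) = ½ xᵀAx - xᵀb is non-increasing and converges, and x^{(k)} → A⁻¹b as k → ∞. -/

import Mathlib

/-!
With `M = D + ωL` the iteration reads `M (x_{k+1} - x_k) = ω (b - A x_k)`. Testing this against
`d = x_{k+1} - x_k` and using `dᵀAd = dᵀDd + 2 dᵀLd` gives
`f(x_{k+1}) - f(x_k) = (1/2 - 1/ω) dᵀDd ≤ 0`, as `D` is positive definite and `ω ∈ (0, 2)`.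
The energies decrease and are bounded below by `f(A⁻¹b)`, so they converge; hence `dᵀDd → 0`,
so `d → 0` and the residual `b - A x_k = ω⁻¹ M d` tends to `0`.
-/

open Matrix Filter Topology

namespace Matrix

variable {m R : Type*} [Fintype m]

theorem det_diagonal_add_of_strictLower [LinearOrder m] [DecidableEq m] [CommRing R]
    (d : m → R) {L : Matrix m m R} (hL : ∀ i j, i ≤ j → L i j = 0) :
    (diagonal d + L).det = ∏ i, d i := by
  have hlow : (diagonal d + L).IsLowerTriangular := fun i j (hij : i < j) => by
    simp [diagonal_apply_ne d hij.ne, hL i j hij.le]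
  simp [det_of_isLowerTriangular _ hlow, hL _ _ le_rfl]

theorem dotProduct_diagonal_mulVec [CommSemiring R] [DecidableEq m] (d v : m → R) :
    v ⬝ᵥ diagonal d *ᵥ v = ∑ i, d i * v i ^ 2 := by
  simp only [dotProduct, mulVec_diagonal]
  exact Finset.sum_congr rfl fun i _ => by ring

theorem IsSymm.dotProduct_mulVec_comm [CommSemiring R] {A : Matrix m m R} (hA : A.IsSymm)
    (v w : m → R) : v ⬝ᵥ A *ᵥ w = w ⬝ᵥ A *ᵥ v := by
  rw [dotProduct_mulVec, ← mulVec_transpose, hA.eq, dotProduct_comm]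

theorem dotProduct_transpose_mulVec_self [CommSemiring R] (L : Matrix m m R) (v : m → R) :
    v ⬝ᵥ Lᵀ *ᵥ v = v ⬝ᵥ L *ᵥ v := by
  rw [dotProduct_mulVec, vecMul_transpose, dotProduct_comm]

theorem tendsto_zero_of_tendsto_dotProduct_diagonal_mulVec [DecidableEq m] {ι : Type*}
    {l : Filter ι} {d : m → ℝ} (hd : ∀ i, 0 < d i) {v : ι → m → ℝ}
    (h : Tendsto (fun k => v k ⬝ᵥ diagonal d *ᵥ v k) l (𝓝 0)) : Tendsto v l (𝓝 0) := by
  refine tendsto_pi_nhds.2 fun i => squeeze_zero_norm (fun k => ?_) (a := fun k =>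
    √(v k ⬝ᵥ diagonal d *ᵥ v k / d i)) (by simpa using (h.div_const (d i)).sqrt)
  refine Real.abs_le_sqrt ((le_div_iff₀' (hd i)).2 ?_)
  rw [dotProduct_diagonal_mulVec]
  exact Finset.single_le_sum (f := fun j => d j * v k j ^ 2)
    (fun j _ => mul_nonneg (hd j).le (sq_nonneg _)) (Finset.mem_univ i)

theorem tendsto_nonsing_inv_mulVec_of_tendsto_mulVec {ι : Type*} [DecidableEq m] {l : Filter ι}
    {A : Matrix m m ℝ} (hA : IsUnit A.det) {b : m → ℝ} {x : ι → m → ℝ}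
    (h : Tendsto (fun k => A *ᵥ x k) l (𝓝 b)) : Tendsto x l (𝓝 (A⁻¹ *ᵥ b)) := by
  have hcont : Continuous fun v : m → ℝ => A⁻¹ *ᵥ v := continuous_const.matrix_mulVec continuous_id
  simpa [Function.comp_def, mulVec_mulVec, nonsing_inv_mul _ hA] using (hcont.tendsto b).comp h

theorem tendsto_mulVec_of_tendsto_step {ι : Type*} {l : Filter ι} {A M : Matrix m m ℝ} {ω : ℝ}
    (hω : ω ≠ 0) {b : m → ℝ} {x δ : ι → m → ℝ} (hstep : ∀ k, M *ᵥ δ k = ω • (b - A *ᵥ x k))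
    (hδ : Tendsto δ l (𝓝 0)) : Tendsto (fun k => A *ᵥ x k) l (𝓝 b) := by
  have hMδ := ((continuous_const.matrix_mulVec (A := fun _ => M) continuous_id).tendsto 0).comp hδ
  have hres : Tendsto (fun k => b - A *ᵥ x k) l (𝓝 0) := by
    rw [← tendsto_const_smul_iff₀ hω, smul_zero]
    simpa [Function.comp_def, hstep] using hMδ
  simpa using (tendsto_const_nhds (x := b)).sub hres

noncomputable def energy (A : Matrix m m ℝ) (b x : m → ℝ) : ℝ :=
  1 / 2 * (x ⬝ᵥ A *ᵥ x) - x ⬝ᵥ b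

theorem energy_add_sub_energy {A : Matrix m m ℝ} (hA : A.IsSymm) (b y d : m → ℝ) :
    energy A b (y + d) - energy A b y = d ⬝ᵥ (A *ᵥ y - b) + 1 / 2 * (d ⬝ᵥ A *ᵥ d) := by
  simp only [energy, mulVec_add, dotProduct_add, add_dotProduct, dotProduct_sub,
    hA.dotProduct_mulVec_comm y d]
  ring

theorem energy_le_energy_of_mulVec_eq {A : Matrix m m ℝ} (hA : A.PosSemidef) {b y : m → ℝ}
    (hy : A *ᵥ y = b) (v : m → ℝ) : energy A b y ≤ energy A b v := by
  have hsymm : A.IsSymm := isHermitian_iff_isSymm.1 hA.isHermitian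
  have h := energy_add_sub_energy hsymm b y (v - y)
  rw [add_sub_cancel, hy, sub_self, dotProduct_zero, zero_add] at h
  have := hA.dotProduct_mulVec_nonneg (v - y)
  simp only [star_trivial] at this
  linarith

theorem sor_step_mulVec_sub [CommRing R] [DecidableEq m] {A D L : Matrix m m R} {ω : R}
    {b x x' : m → R} (hA : A = D + L + Lᵀ) (hM : IsUnit (D + ω • L).det)
    (hx' : x' = (D + ω • L)⁻¹ *ᵥ (((1 - ω) • D - ω • Lᵀ) *ᵥ x + ω • b)) :
    (D + ω • L) *ᵥ (x' - x) = ω • (b - A *ᵥ x) := by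
  rw [mulVec_sub, hx', mulVec_mulVec, mul_nonsing_inv _ hM, one_mulVec, hA]
  simp only [add_mulVec, sub_mulVec, smul_mulVec]
  module

theorem energy_add_sub_energy_of_sor_step {A D L : Matrix m m ℝ} (hA : A = D + L + Lᵀ)
    (hsymm : A.IsSymm) {ω : ℝ} (hω : ω ≠ 0) {b y d : m → ℝ}
    (hd : (D + ω • L) *ᵥ d = ω • (b - A *ᵥ y)) :
    energy A b (y + d) - energy A b y = (1 / 2 - 1 / ω) * (d ⬝ᵥ D *ᵥ d) := by
  have hstep : d ⬝ᵥ (A *ᵥ y - b) = -(1 / ω) * (d ⬝ᵥ D *ᵥ d) - d ⬝ᵥ L *ᵥ d := by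
    have := congrArg (d ⬝ᵥ ·) hd
    simp only [add_mulVec, smul_mulVec, dotProduct_add, dotProduct_smul, dotProduct_sub,
      smul_eq_mul] at this ⊢
    field_simp
    linear_combination this
  have hquad : d ⬝ᵥ A *ᵥ d = d ⬝ᵥ D *ᵥ d + 2 * (d ⬝ᵥ L *ᵥ d) := by
    rw [hA, add_mulVec, add_mulVec, dotProduct_add, dotProduct_add,
      dotProduct_transpose_mulVec_self]
    ring
  rw [energy_add_sub_energy hsymm, hstep, hquad]
  ring

end Matrix

/-- For `A` symmetric positive definite and fixed `ω ∈ (0,2)`, the SOR iteration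
produces non-increasing, convergent energies `f(x^{(k)})`, and `x^{(k)} → A⁻¹ b`. -/
theorem sor_converges {n : ℕ}
    (A D L : Matrix (Fin n) (Fin n) ℝ)
    (hApd : A.PosDef)
    (hD : D = Matrix.diagonal (fun i => A i i))
    (hL : ∀ i j : Fin n, i ≤ j → L i j = 0)
    (hA : A = D + L + Lᵀ)
    (b : Fin n → ℝ) (ω : ℝ) (hω : ω ∈ Set.Ioo (0 : ℝ) 2)
    (f : (Fin n → ℝ) → ℝ)
    (hfdef : f = fun x => (1 / 2) * (x ⬝ᵥ A.mulVec x) - x ⬝ᵥ b)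
    (x : ℕ → Fin n → ℝ)
    (hx : ∀ k : ℕ,
      x (k + 1) = (D + ω • L)⁻¹.mulVec ((((1 - ω) • D - ω • Lᵀ).mulVec (x k)) + ω • b)) :
    (∀ k : ℕ, f (x (k + 1)) ≤ f (x k)) ∧
      (∃ l : ℝ, Filter.Tendsto (fun k => f (x k)) Filter.atTop (nhds l)) ∧
      Filter.Tendsto x Filter.atTop (nhds (A⁻¹.mulVec b)) := by
  obtain rfl : f = energy A b := hfdef
  obtain ⟨hω0, hω2⟩ := hω
  have hdiag (i : Fin n) : 0 < A i i := hApd.diag_pos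
  have hAunit : IsUnit A.det := (isUnit_iff_isUnit_det A).1 hApd.isUnit
  have hMunit : IsUnit (D + ω • L).det := by
    rw [hD, det_diagonal_add_of_strictLower _ fun i j hij => by simp [hL i j hij]]
    exact (Finset.prod_pos fun i _ => hdiag i).ne'.isUnit
  set δ : ℕ → Fin n → ℝ := fun k => x (k + 1) - x k
  have hstep k : (D + ω • L) *ᵥ δ k = ω • (b - A *ᵥ x k) := sor_step_mulVec_sub hA hMunit (hx k)
  have hdecr k : energy A b (x (k + 1)) - energy A b (x k) =
      (1 / 2 - 1 / ω) * (δ k ⬝ᵥ D *ᵥ δ k) := by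
    simpa [δ] using energy_add_sub_energy_of_sor_step hA
      (isHermitian_iff_isSymm.1 hApd.isHermitian) hω0.ne' (hstep k)
  have hcoef : 1 / 2 - 1 / ω < 0 := sub_neg.2 (one_div_lt_one_div_of_lt hω0 hω2)
  have hmono k : energy A b (x (k + 1)) ≤ energy A b (x k) := by
    have := (PosDef.diagonal hdiag).posSemidef.dotProduct_mulVec_nonneg (δ k)
    simp only [star_trivial, ← hD] at this
    nlinarith [hdecr k]
  have hsol : A *ᵥ (A⁻¹ *ᵥ b) = b := by
    rw [mulVec_mulVec, mul_nonsing_inv _ hAunit, one_mulVec]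
  have hlim := tendsto_atTop_ciInf (antitone_nat_of_succ_le hmono) ⟨_, Set.forall_mem_range.2
    fun k => energy_le_energy_of_mulVec_eq hApd.posSemidef hsol (x k)⟩
  have hq : Tendsto (fun k => δ k ⬝ᵥ diagonal (fun i => A i i) *ᵥ δ k) atTop (𝓝 0) := by
    rw [← tendsto_const_smul_iff₀ hcoef.ne, smul_zero, ← hD]
    simpa [Function.comp_def, hdecr] using (hlim.comp (tendsto_add_atTop_nat 1)).sub hlim
  exact ⟨hmono, ⟨_, hlim⟩, tendsto_nonsing_inv_mulVec_of_tendsto_mulVec hAunit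
    (tendsto_mulVec_of_tendsto_step hω0.ne' hstep
      (tendsto_zero_of_tendsto_dotProduct_diagonal_mulVec hdiag hq))⟩
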